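/- For every k ∈ ℤ and b ∈ ℝ^d, the wavelet ψ_{k,b} has two vanishing moments: ∫_{ℝ^d} ψ_{k,b}(x) dx = 0 and ∫_{ℝ^d} x ψ_{k,b}(x) dx = 0 (the latter as a vector-valued integral in ℝ^d). -/

import Mathlib

/-! Both `φ` and `ψ` are even, and dilating by `2^{-1/d}` doubles integrals on `ℝ^d`, so
`∫ ψ = ∫ φ - 2⁻¹ · 2 ∫ φ = 0`. Dilation and a factor preserve evenness and a zero integral, so
`g y = 2^{k/2} ψ(2^{k/d} y)` is even with `∫ g = 0`. Since `ψ_{k,b}(x) = g(x - b)`, translating gives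
`∫ ψ_{k,b}(x) x dx = ∫ g(y) y dy + (∫ g) b`, where the first term vanishes by evenness. -/

open MeasureTheory

/-- The rectifier (ReLU) function. -/
noncomputable def rect (x : ℝ) : ℝ := max 0 x

/-- The trapezoid function `t`: equal to 2 on [-1,1], vanishing outside (-3,3), linear between. -/
noncomputable def trap (x : ℝ) : ℝ := rect (x + 3) - rect (x + 1) - rect (x - 1) + rect (x - 3)

/-- The scaling ("father") function `φ(x) = C_d · rect(Σ_j t(x_j) − 2(d−1))` on `ℝ^d`. -/
noncomputable def scalingFn (d : ℕ) (Cd : ℝ) (x : EuclideanSpace ℝ (Fin d)) : ℝ :=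
  Cd * rect ((∑ j, trap (x j)) - 2 * ((d : ℝ) - 1))

/-- The ("mother") wavelet `ψ(x) = φ(x) − 2⁻¹ φ(2^{−1/d} x)`. -/
noncomputable def psiFn (d : ℕ) (Cd : ℝ) (x : EuclideanSpace ℝ (Fin d)) : ℝ :=
  scalingFn d Cd x - 2⁻¹ * scalingFn d Cd (((2 : ℝ) ^ (-(1 : ℝ) / d)) • x)

/-- The wavelet term `ψ_{k,b}(x) = 2^{k/2} ψ(2^{k/d}(x − b))`. -/
noncomputable def psikb (d : ℕ) (Cd : ℝ) (k : ℤ) (b x : EuclideanSpace ℝ (Fin d)) : ℝ :=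
  (2 : ℝ) ^ ((k : ℝ) / 2) * psiFn d Cd (((2 : ℝ) ^ ((k : ℝ) / d)) • (x - b))

section Moments

variable {E : Type*} [NormedAddCommGroup E] [NormedSpace ℝ E] [MeasurableSpace E] [BorelSpace E]

theorem integral_smul_id_eq_zero_of_even (μ : Measure E) [μ.IsNegInvariant] {g : E → ℝ}
    (hg : ∀ x, g (-x) = g x) : ∫ x, g x • x ∂μ = 0 := by
  have h := integral_neg_eq_self (fun x => g x • x) μ
  simp only [hg, smul_neg, integral_neg] at h
  have := IsAddTorsionFree.of_isTorsionFree ℝ E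
  exact self_eq_neg.mp h.symm

theorem integral_comp_sub_smul_id [CompleteSpace E] (μ : Measure E) [μ.IsAddRightInvariant]
    {g : E → ℝ} (hg : Integrable g μ) (hg_id : Integrable (fun y => g y • y) μ) (b : E) :
    ∫ x, g (x - b) • x ∂μ = ∫ y, g y • y ∂μ + (∫ y, g y ∂μ) • b := by
  calc ∫ x, g (x - b) • x ∂μ = ∫ x, (fun y => g y • y + g y • b) (x - b) ∂μ := by
        simp_rw [← smul_add, sub_add_cancel]
    _ = ∫ y, g y • y + g y • b ∂μ :=
        integral_sub_right_eq_self (fun y => g y • y + g y • b) b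
    _ = ∫ y, g y • y ∂μ + (∫ y, g y ∂μ) • b := by
        rw [integral_add hg_id (hg.smul_const b), integral_smul_const]

end Moments

theorem integral_comp_two_rpow_div_smul {d : ℕ} (hd : d ≠ 0) (s : ℝ)
    (g : EuclideanSpace ℝ (Fin d) → ℝ) :
    ∫ x, g ((2 : ℝ) ^ (s / d) • x) = 2 ^ (-s) * ∫ x, g x := by
  rw [Measure.integral_comp_smul, finrank_euclideanSpace_fin, smul_eq_mul,
    ← Real.rpow_natCast, ← Real.rpow_mul zero_le_two,
    div_mul_cancel₀ _ (Nat.cast_ne_zero.mpr hd), abs_of_pos (by positivity), Real.rpow_neg zero_le_two]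

theorem sum_le_card_sub_one_mul_of_eq_zero {ι : Type*} [Fintype ι] {f : ι → ℝ} {M : ℝ}
    (hf : ∀ i, f i ≤ M) {j : ι} (hj : f j = 0) : ∑ i, f i ≤ (Fintype.card ι - 1) * M := by
  classical
  rw [← Finset.sum_erase_add _ _ (Finset.mem_univ j), hj, add_zero]
  calc ∑ i ∈ Finset.univ.erase j, f i ≤ (Finset.univ.erase j).card • M :=
        Finset.sum_le_card_nsmul _ _ _ fun i _ => hf i
    _ = (Fintype.card ι - 1) * M := by
        rw [Finset.card_erase_of_mem (Finset.mem_univ j), Finset.card_univ, nsmul_eq_mul,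
          Nat.cast_sub (Fintype.card_pos_iff.mpr ⟨j⟩), Nat.cast_one]

theorem rect_neg (a : ℝ) : rect (-a) = rect a - a := by
  simp only [rect, max_def]; split_ifs <;> linarith

theorem trap_neg (x : ℝ) : trap (-x) = trap x := by
  simp only [trap]
  rw [show -x + 3 = -(x - 3) by ring, show -x + 1 = -(x - 1) by ring,
    show -x - 1 = -(x + 1) by ring, show -x - 3 = -(x + 3) by ring,
    rect_neg, rect_neg, rect_neg, rect_neg]
  ring

theorem trap_le_two (x : ℝ) : trap x ≤ 2 := by
  simp only [trap, rect, max_def]; split_ifs <;> linarith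

theorem trap_eq_zero_of_three_le_abs {x : ℝ} (h : 3 ≤ |x|) : trap x = 0 := by
  rcases le_abs.mp h with h | h <;>
  · simp only [trap, rect, max_def]; split_ifs <;> linarith

theorem continuous_trap : Continuous trap := by
  unfold trap rect; fun_prop

section ScalingFn

variable {d : ℕ} {Cd : ℝ}

theorem continuous_scalingFn : Continuous (scalingFn d Cd) := by
  unfold scalingFn rect
  have := fun j : Fin d => continuous_trap.comp (EuclideanSpace.proj (𝕜 := ℝ) j).continuous
  fun_prop

theorem scalingFn_eq_zero_of_trap_eq_zero {x : EuclideanSpace ℝ (Fin d)} {j : Fin d}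
    (hj : trap (x j) = 0) : scalingFn d Cd x = 0 := by
  have hsum := sum_le_card_sub_one_mul_of_eq_zero (fun i => trap_le_two (x i)) hj
  rw [Fintype.card_fin] at hsum
  rw [scalingFn, rect, max_eq_left (by linarith), mul_zero]

theorem hasCompactSupport_scalingFn : HasCompactSupport (scalingFn d Cd) := by
  let box := Set.univ.pi fun _ : Fin d => Set.Icc (-3 : ℝ) 3
  refine HasCompactSupport.intro ((EuclideanSpace.equiv (Fin d) ℝ).toHomeomorph.isCompact_preimage
    (s := box) |>.mpr (isCompact_univ_pi fun _ => isCompact_Icc)) fun x hx => ?_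
  obtain ⟨j, hj⟩ : ∃ j, x j ∉ Set.Icc (-3 : ℝ) 3 := by
    simp only [box, Set.mem_preimage, Set.mem_univ_pi, not_forall] at hx
    exact hx
  refine scalingFn_eq_zero_of_trap_eq_zero (j := j) (trap_eq_zero_of_three_le_abs ?_)
  rw [Set.mem_Icc, ← abs_le, not_le] at hj
  exact hj.le

theorem scalingFn_neg (x : EuclideanSpace ℝ (Fin d)) :
    scalingFn d Cd (-x) = scalingFn d Cd x := by
  simp only [scalingFn, PiLp.neg_apply, trap_neg]

theorem integrable_scalingFn : Integrable (scalingFn d Cd) :=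
  continuous_scalingFn.integrable_of_hasCompactSupport hasCompactSupport_scalingFn

theorem continuous_psiFn : Continuous (psiFn d Cd) := by
  unfold psiFn
  have := continuous_scalingFn (d := d) (Cd := Cd)
  fun_prop

theorem hasCompactSupport_psiFn : HasCompactSupport (psiFn d Cd) := by
  unfold psiFn
  simp_rw [sub_eq_add_neg]
  exact hasCompactSupport_scalingFn.add
    ((hasCompactSupport_scalingFn.comp_smul (by positivity)).mul_left).neg

theorem psiFn_neg (x : EuclideanSpace ℝ (Fin d)) : psiFn d Cd (-x) = psiFn d Cd x := by
  simp only [psiFn, smul_neg, scalingFn_neg]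

theorem integral_psiFn (hd : d ≠ 0) : ∫ x, psiFn d Cd x = 0 := by
  unfold psiFn
  rw [integral_sub integrable_scalingFn
      ((integrable_scalingFn.comp_smul (by positivity)).const_mul _),
    integral_const_mul, integral_comp_two_rpow_div_smul hd, neg_neg, Real.rpow_one]
  ring

end ScalingFn

theorem statement6_general (d : ℕ) (hd : 1 ≤ d) (Cd : ℝ)
    (k : ℤ) (b : EuclideanSpace ℝ (Fin d)) :
    (∫ x : EuclideanSpace ℝ (Fin d), psikb d Cd k b x = 0) ∧
    (∫ x : EuclideanSpace ℝ (Fin d), psikb d Cd k b x • x = (0 : EuclideanSpace ℝ (Fin d))) := by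
  set g : EuclideanSpace ℝ (Fin d) → ℝ :=
    fun y => (2 : ℝ) ^ ((k : ℝ) / 2) * psiFn d Cd ((2 : ℝ) ^ ((k : ℝ) / d) • y)
  have hpsikb : ∀ x, psikb d Cd k b x = g (x - b) := fun x => rfl
  have hg_cont : Continuous g := by
    have := continuous_psiFn (d := d) (Cd := Cd)
    fun_prop
  have hg_supp : HasCompactSupport g :=
    (hasCompactSupport_psiFn.comp_smul (by positivity)).mul_left
  have hg_even : ∀ y, g (-y) = g y := fun y => by simp only [g, smul_neg, psiFn_neg]
  have hg_zero : ∫ y, g y = 0 := by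
    rw [integral_const_mul, integral_comp_two_rpow_div_smul (by omega),
      integral_psiFn (by omega), mul_zero, mul_zero]
  simp_rw [hpsikb]
  refine ⟨by rw [integral_sub_right_eq_self g b, hg_zero], ?_⟩
  rw [integral_comp_sub_smul_id _ (hg_cont.integrable_of_hasCompactSupport hg_supp)
      ((hg_cont.smul continuous_id).integrable_of_hasCompactSupport hg_supp.smul_right),
    integral_smul_id_eq_zero_of_even _ hg_even, hg_zero, zero_smul, add_zero]

/-- each wavelet `ψ_{k,b}` has two vanishing moments. -/
theorem statement6 (d : ℕ) (hd : 1 ≤ d) (Cd : ℝ) (hCd : 0 < Cd)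
    (hnorm : ∫ x : EuclideanSpace ℝ (Fin d), scalingFn d Cd x = 1)
    (k : ℤ) (b : EuclideanSpace ℝ (Fin d)) :
    (∫ x : EuclideanSpace ℝ (Fin d), psikb d Cd k b x = 0) ∧
    (∫ x : EuclideanSpace ℝ (Fin d), psikb d Cd k b x • x = (0 : EuclideanSpace ℝ (Fin d))) :=
  statement6_general d hd Cd k b
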